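/- Let β be a partition in NC(n). Then the map α ↦ P_β^{-1} · α sends the set {α ∈ NC(n) : α ≤ β} into itself. -/

import Mathlib

open scoped Classical

/-- The minimum of a finset of naturals (`0` if empty). -/
noncomputable def fmin (A : Finset ℕ) : ℕ := sInf (A : Set ℕ)

/-- The maximum of a finset of naturals (`0` if empty). -/
noncomputable def fmax (A : Finset ℕ) : ℕ := sSup (A : Set ℕ)

/-- `α` is a partition of the finite set `F ⊆ ℕ`. -/
def IsPartitionOfSet (F : Finset ℕ) (α : Finset (Finset ℕ)) : Prop :=
  (∀ V ∈ α, V.Nonempty) ∧ (∀ V ∈ α, V ⊆ F) ∧ (∀ m ∈ F, ∃ V ∈ α, m ∈ V) ∧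
    ∀ V ∈ α, ∀ W ∈ α, V ≠ W → V ∩ W = ∅

/-- `α` is a partition of `{1,…,n}`. -/
def IsPartitionOf (n : ℕ) (α : Finset (Finset ℕ)) : Prop :=
  IsPartitionOfSet (Finset.Icc 1 n) α

/-- Two distinct blocks of the family `π` cross: there are `a < b < c < d` with
`a, c` in one block and `b, d` in a different block. -/
def IsCrossing (π : Finset (Finset ℕ)) : Prop :=
  ∃ A ∈ π, ∃ B ∈ π, A ≠ B ∧
    ∃ a ∈ A, ∃ b ∈ B, ∃ c ∈ A, ∃ d ∈ B, a < b ∧ b < c ∧ c < d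

/-- `α ∈ NC(n)`: a non-crossing partition of `{1,…,n}`. -/
def IsNCPartition (n : ℕ) (α : Finset (Finset ℕ)) : Prop :=
  IsPartitionOf n α ∧ ¬ IsCrossing α

/-- Reverse refinement order `α ≤ β`: every block of `α` is contained in a block of `β`
(equivalently, every block of `β` is a union of blocks of `α`). -/
def Refines (α β : Finset (Finset ℕ)) : Prop := ∀ V ∈ α, ∃ W ∈ β, V ⊆ W

/-- The partial order `α ≪ β`: `α ≤ β` and for every block `W` of `β` there is a block
`V` of `α` containing both `min W` and `max W`. -/
def LL (α β : Finset (Finset ℕ)) : Prop :=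
  Refines α β ∧ ∀ W ∈ β, ∃ V ∈ α, fmin W ∈ V ∧ fmax W ∈ V

/-- A block `V` (of `α`) is `β`-special: some block `W` of `β` has the same min and max. -/
def SpecialBlock (β : Finset (Finset ℕ)) (V : Finset ℕ) : Prop :=
  ∃ W ∈ β, fmin V = fmin W ∧ fmax V = fmax W

/-- `V` is an outer block of `α`: no block of `α` strictly nests around it. -/
def OuterBlock (α : Finset (Finset ℕ)) (V : Finset ℕ) : Prop :=
  ∀ V' ∈ α, ¬ (fmin V' < fmin V ∧ fmax V < fmax V')

/-- `π` is a linked partition of the finite set `F ⊆ ℕ`. -/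
def IsLinkedPartitionOfSet (F : Finset ℕ) (π : Finset (Finset ℕ)) : Prop :=
  (∀ A ∈ π, A.Nonempty) ∧ (∀ A ∈ π, A ⊆ F) ∧ (∀ m ∈ F, ∃ A ∈ π, m ∈ A) ∧
    ∀ A ∈ π, ∀ B ∈ π, A ≠ B →
      A ∩ B = ∅ ∨
        (2 ≤ A.card ∧ 2 ≤ B.card ∧ (A ∩ B).card = 1 ∧ fmin A ≠ fmin B ∧
          ∀ x ∈ A ∩ B, x = fmin A ∨ x = fmin B)

/-- `π ∈ NCL(F)`: a non-crossing linked partition of the finite set `F`. -/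
def IsNCLOfSet (F : Finset ℕ) (π : Finset (Finset ℕ)) : Prop :=
  IsLinkedPartitionOfSet F π ∧ ¬ IsCrossing π

/-- `π ∈ NCL(n)`: a non-crossing linked partition of `{1,…,n}`. -/
def IsNCL (n : ℕ) (π : Finset (Finset ℕ)) : Prop :=
  IsNCLOfSet (Finset.Icc 1 n) π

/-- The number of blocks of `π` containing `m`. -/
noncomputable def coverCount (π : Finset (Finset ℕ)) (m : ℕ) : ℕ :=
  (π.filter fun A => m ∈ A).card

/-- `m` is singly-covered by `π`: it lies in exactly one block. -/
def SinglyCovered (π : Finset (Finset ℕ)) (m : ℕ) : Prop := coverCount π m = 1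

/-- `m` is doubly-covered by `π`: it lies in exactly two blocks. -/
def DoublyCovered (π : Finset (Finset ℕ)) (m : ℕ) : Prop := coverCount π m = 2

/-- The partition `π̂` generated by the blocks of `π`: its blocks are the connected
components of the ground set under the relation of lying in a common block of `π`. -/
noncomputable def genPart (π : Finset (Finset ℕ)) : Finset (Finset ℕ) :=
  (π.sup id).image fun m =>
    (π.sup id).filter fun x =>
      Relation.EqvGen (fun a b => ∃ A ∈ π, a ∈ A ∧ b ∈ A) m x

/-- The unlinking `π̌` of a linked partition `π`. -/
noncomputable def unlink (π : Finset (Finset ℕ)) : Finset (Finset ℕ) :=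
  π.image fun A => if SinglyCovered π (fmin A) then A else A.erase (fmin A)

/-- The block of `α` containing `m` (empty if there is none). -/
noncomputable def blockOf (α : Finset (Finset ℕ)) (m : ℕ) : Finset ℕ :=
  (α.filter fun V => m ∈ V).sup id

/-- The successor of `m` in the cycle on the block `V` (elements in increasing order). -/
noncomputable def nextInBlock (V : Finset ℕ) (m : ℕ) : ℕ :=
  if m = fmax V then fmin V else fmin (V.filter fun x => m < x)

/-- The predecessor of `m` in the cycle on the block `V`. -/
noncomputable def prevInBlock (V : Finset ℕ) (m : ℕ) : ℕ :=
  if m = fmin V then fmax V else fmax (V.filter fun x => x < m)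

/-- The permutation `P_α` associated to a partition `α`, as a function: each block
`{i₁ < i₂ < ⋯ < iₘ}` becomes the cycle `i₁ ↦ i₂ ↦ ⋯ ↦ iₘ ↦ i₁`. -/
noncomputable def permOf (α : Finset (Finset ℕ)) (m : ℕ) : ℕ :=
  if m ∈ blockOf α m then nextInBlock (blockOf α m) m else m

/-- The inverse permutation `P_α⁻¹`, as a function. -/
noncomputable def permOfInv (α : Finset (Finset ℕ)) (m : ℕ) : ℕ :=
  if m ∈ blockOf α m then prevInBlock (blockOf α m) m else m

/-- The action `τ·α` of a map `τ` on a partition `α = {V₁,…,V_p}`, giving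
`{τ(V₁),…,τ(V_p)}`. -/
def mapPart (τ : ℕ → ℕ) (α : Finset (Finset ℕ)) : Finset (Finset ℕ) :=
  α.image fun V => V.image τ

/-- The cycled unlinking `π° := P_{π̂}⁻¹ · π̌`. -/
noncomputable def cycUnlink (π : Finset (Finset ℕ)) : Finset (Finset ℕ) :=
  mapPart (permOfInv (genPart π)) (unlink π)

/-- `NC(n)` as a finset. -/
noncomputable def NCF (n : ℕ) : Finset (Finset (Finset ℕ)) :=
  ((Finset.Icc 1 n).powerset.powerset).filter (IsNCPartition n)

/-- `NCL(n)` as a finset. -/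
noncomputable def NCLF (n : ℕ) : Finset (Finset (Finset ℕ)) :=
  ((Finset.Icc 1 n).powerset.powerset).filter (IsNCL n)

/-- The restriction `π|_E`: the blocks of `π` contained in `E`. -/
def restrictL (π : Finset (Finset ℕ)) (E : Finset ℕ) : Finset (Finset ℕ) :=
  π.filter fun A => A ⊆ E

/-- The partition `β₀` obtained from `β` by leaving blocks of size `≤ 2` intact and
breaking each block `W` with `|W| ≥ 3` into the doubleton `{min W, max W}` together
with `|W| - 2` singletons. -/
noncomputable def breakBlocks (β : Finset (Finset ℕ)) : Finset (Finset ℕ) :=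
  β.biUnion fun W =>
    if W.card ≤ 2 then {W}
    else insert {fmin W, fmax W} ((W \ {fmin W, fmax W}).image fun x => ({x} : Finset ℕ))

/-!
`P_β⁻¹` maps every block of `β` bijectively onto itself, so `P_β⁻¹ · α` is again a partition
refined by `β`. A crossing of `P_β⁻¹ · α` between points of two different blocks of `β` would be a
crossing of `β`. Inside a single block `W`, `P_β` is the cyclic rotation of `W` to the next
element, so it carries a crossing quadruple `a < b < c < d` of `P_β⁻¹ · α` either to a quadruple
in the same order or, when `d = max W` wraps around to `min W`, to one in the cyclically shifted
order `d < a < b < c`; both are crossings of `α`.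
-/

open Finset

lemma fmin_le {A : Finset ℕ} {x : ℕ} (hx : x ∈ A) : fmin A ≤ x :=
  Nat.sInf_le (by exact_mod_cast hx)

lemma le_fmax {A : Finset ℕ} {x : ℕ} (hx : x ∈ A) : x ≤ fmax A :=
  le_csSup A.bddAbove (by exact_mod_cast hx)

lemma fmin_mem {A : Finset ℕ} (h : A.Nonempty) : fmin A ∈ A := by
  rw [fmin, h.csInf_eq_min']
  exact A.min'_mem h

lemma fmax_mem {A : Finset ℕ} (h : A.Nonempty) : fmax A ∈ A := by
  rw [fmax, h.csSup_eq_max']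
  exact A.max'_mem h

lemma ne_fmax_of_lt {V : Finset ℕ} {x y : ℕ} (hy : y ∈ V) (hxy : x < y) : x ≠ fmax V :=
  (hxy.trans_le (le_fmax hy)).ne

section Cycle

variable {V : Finset ℕ} {x y m : ℕ}

lemma nextInBlock_fmax : nextInBlock V (fmax V) = fmin V := by
  rw [nextInBlock, if_pos rfl]

lemma nextInBlock_le (hy : y ∈ V) (hxy : x < y) : nextInBlock V x ≤ y := by
  rw [nextInBlock, if_neg (ne_fmax_of_lt hy hxy)]
  exact fmin_le (mem_filter.mpr ⟨hy, hxy⟩)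

lemma lt_nextInBlock (hx : x ∈ V) (hmax : x ≠ fmax V) : x < nextInBlock V x := by
  rw [nextInBlock, if_neg hmax]
  have hne : (V.filter fun z => x < z).Nonempty :=
    ⟨fmax V, mem_filter.mpr ⟨fmax_mem ⟨x, hx⟩, (le_fmax hx).lt_of_ne hmax⟩⟩
  exact (mem_filter.mp (fmin_mem hne)).2

lemma nextInBlock_lt_nextInBlock (hy : y ∈ V) (hxy : x < y) (hmax : y ≠ fmax V) :
    nextInBlock V x < nextInBlock V y :=
  (nextInBlock_le hy hxy).trans_lt (lt_nextInBlock hy hmax)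

lemma fmin_lt_nextInBlock (hx : x ∈ V) (hmax : x ≠ fmax V) : fmin V < nextInBlock V x :=
  (fmin_le hx).trans_lt (lt_nextInBlock hx hmax)

lemma prevInBlock_mem (hm : m ∈ V) : prevInBlock V m ∈ V := by
  unfold prevInBlock
  split_ifs with h
  · exact fmax_mem ⟨m, hm⟩
  · have hne : (V.filter fun z => z < m).Nonempty :=
      ⟨fmin V, mem_filter.mpr ⟨fmin_mem ⟨m, hm⟩, (fmin_le hm).lt_of_ne' h⟩⟩
    exact (mem_filter.mp (fmax_mem hne)).1

lemma nextInBlock_prevInBlock (hm : m ∈ V) : nextInBlock V (prevInBlock V m) = m := by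
  by_cases h : m = fmin V
  · rw [prevInBlock, if_pos h, nextInBlock_fmax, h]
  have hne : (V.filter fun z => z < m).Nonempty :=
    ⟨fmin V, mem_filter.mpr ⟨fmin_mem ⟨m, hm⟩, (fmin_le hm).lt_of_ne' h⟩⟩
  set p := fmax (V.filter fun z => z < m)
  obtain ⟨hpV, hpm⟩ := mem_filter.mp (fmax_mem hne)
  rw [prevInBlock, if_neg h, nextInBlock, if_neg (ne_fmax_of_lt hm hpm)]
  refine le_antisymm (fmin_le (mem_filter.mpr ⟨hm, hpm⟩)) ?_
  obtain ⟨hyV, hpy⟩ := mem_filter.mp (fmin_mem ⟨m, mem_filter.mpr ⟨hm, hpm⟩⟩)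
  by_contra! hym
  exact (le_fmax (mem_filter.mpr ⟨hyV, hym⟩)).not_gt hpy

end Cycle

section BlockPermutation

variable {β : Finset (Finset ℕ)} {W : Finset ℕ} {m : ℕ}
  (hd : ∀ V ∈ β, ∀ W ∈ β, V ≠ W → V ∩ W = ∅)
include hd

lemma blockOf_eq_of_mem (hW : W ∈ β) (hm : m ∈ W) : blockOf β m = W := by
  have hfilter : β.filter (fun V => m ∈ V) = {W} := by
    refine eq_singleton_iff_unique_mem.mpr ⟨mem_filter.mpr ⟨hW, hm⟩, fun V hV => ?_⟩
    obtain ⟨hVβ, hmV⟩ := mem_filter.mp hV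
    by_contra hVW
    simpa [hd V hVβ W hW hVW] using mem_inter.mpr ⟨hmV, hm⟩
  rw [blockOf, hfilter, sup_singleton, id]

lemma permOfInv_eq_prevInBlock (hW : W ∈ β) (hm : m ∈ W) :
    permOfInv β m = prevInBlock W m := by
  rw [permOfInv, blockOf_eq_of_mem hd hW hm, if_pos hm]

lemma permOfInv_mem (hW : W ∈ β) (hm : m ∈ W) : permOfInv β m ∈ W := by
  rw [permOfInv_eq_prevInBlock hd hW hm]
  exact prevInBlock_mem hm

lemma nextInBlock_permOfInv (hW : W ∈ β) (hm : m ∈ W) :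
    nextInBlock W (permOfInv β m) = m := by
  rw [permOfInv_eq_prevInBlock hd hW hm]
  exact nextInBlock_prevInBlock hm

lemma permOf_permOfInv (hW : W ∈ β) (hm : m ∈ W) : permOf β (permOfInv β m) = m := by
  have hm' := permOfInv_mem hd hW hm
  rw [permOf, blockOf_eq_of_mem hd hW hm', if_pos hm', nextInBlock_permOfInv hd hW hm]

lemma mapsTo_permOfInv (hW : W ∈ β) : Set.MapsTo (permOfInv β) W W :=
  fun _ hm => permOfInv_mem hd hW hm

lemma image_permOfInv_of_mem (hW : W ∈ β) : W.image (permOfInv β) = W := by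
  have hinj : Set.InjOn (permOfInv β) W :=
    Set.LeftInvOn.injOn (f₁' := permOf β) fun _ hm => permOf_permOfInv hd hW hm
  refine eq_of_subset_of_card_le (image_subset_iff.mpr (mapsTo_permOfInv hd hW)) ?_
  rw [card_image_of_injOn hinj]

lemma mem_and_nextInBlock_mem_of_mem_image {A : Finset ℕ} {x : ℕ} (hW : W ∈ β) (hAW : A ⊆ W)
    (hx : x ∈ A.image (permOfInv β)) : x ∈ W ∧ nextInBlock W x ∈ A := by
  obtain ⟨y, hy, rfl⟩ := mem_image.mp hx
  rw [nextInBlock_permOfInv hd hW (hAW hy)]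
  exact ⟨permOfInv_mem hd hW (hAW hy), hy⟩

end BlockPermutation

lemma bijOn_permOfInv {F : Finset ℕ} {β : Finset (Finset ℕ)} (hβ : IsPartitionOfSet F β) :
    Set.BijOn (permOfInv β) F F := by
  obtain ⟨-, hsub, hcov, hd⟩ := hβ
  refine ⟨fun m hm => ?_, Set.LeftInvOn.injOn (f₁' := permOf β) fun m hm => ?_, fun m hm => ?_⟩
  · obtain ⟨W, hW, hmW⟩ := hcov m hm
    exact hsub W hW (permOfInv_mem hd hW hmW)
  · obtain ⟨W, hW, hmW⟩ := hcov m hm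
    exact permOf_permOfInv hd hW hmW
  · obtain ⟨W, hW, hmW⟩ := hcov m hm
    rw [← image_permOfInv_of_mem hd hW] at hmW
    obtain ⟨x, hx, rfl⟩ := mem_image.mp hmW
    exact ⟨x, hsub W hW hx, rfl⟩

lemma isPartitionOfSet_mapPart {F : Finset ℕ} {α : Finset (Finset ℕ)} {τ : ℕ → ℕ}
    (hα : IsPartitionOfSet F α) (hτ : Set.BijOn τ F F) : IsPartitionOfSet F (mapPart τ α) := by
  obtain ⟨hne, hsub, hcov, hd⟩ := hα
  refine ⟨?_, ?_, fun m hm => ?_, ?_⟩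
  · simp only [mapPart, forall_mem_image]
    exact fun V hV => (hne V hV).image τ
  · simp only [mapPart, forall_mem_image]
    exact fun V hV => image_subset_iff.mpr fun x hx => hτ.mapsTo (hsub V hV hx)
  · obtain ⟨x, hx, rfl⟩ := hτ.surjOn hm
    obtain ⟨V, hV, hxV⟩ := hcov x hx
    exact ⟨V.image τ, mem_image_of_mem _ hV, mem_image_of_mem τ hxV⟩
  · simp only [mapPart, forall_mem_image]
    intro V hV W hW hVW
    have hVW' := disjoint_coe.mpr <| disjoint_iff_inter_eq_empty.mpr <|
      hd V hV W hW fun h => hVW (h ▸ rfl)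
    have himage := hVW'.image hτ.injOn (coe_subset.mpr (hsub V hV)) (coe_subset.mpr (hsub W hW))
    rw [← coe_image, ← coe_image, disjoint_coe] at himage
    exact disjoint_iff_inter_eq_empty.mp himage

lemma refines_mapPart {α β : Finset (Finset ℕ)} {τ : ℕ → ℕ} (h : Refines α β)
    (hτ : ∀ W ∈ β, Set.MapsTo τ W W) : Refines (mapPart τ α) β := by
  simp only [Refines, mapPart, forall_mem_image]
  intro V hV
  obtain ⟨W, hW, hVW⟩ := h V hV
  exact ⟨W, hW, image_subset_iff.mpr fun x hx => hτ W hW (hVW hx)⟩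

lemma not_isCrossing_mapPart_permOfInv {α β : Finset (Finset ℕ)}
    (hd : ∀ V ∈ β, ∀ W ∈ β, V ≠ W → V ∩ W = ∅) (hβ : ¬ IsCrossing β) (hα : ¬ IsCrossing α)
    (h : Refines α β) : ¬ IsCrossing (mapPart (permOfInv β) α) := by
  rintro ⟨_, hA', _, hB', hAB, a, ha, b, hb, c, hc, d, hd', hab, hbc, hcd⟩
  obtain ⟨A, hA, rfl⟩ := mem_image.mp hA'
  obtain ⟨B, hB, rfl⟩ := mem_image.mp hB'
  obtain ⟨W, hW, hAW⟩ := h A hA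
  obtain ⟨W', hW', hBW'⟩ := h B hB
  obtain ⟨haW, ha⟩ := mem_and_nextInBlock_mem_of_mem_image hd hW hAW ha
  obtain ⟨hcW, hc⟩ := mem_and_nextInBlock_mem_of_mem_image hd hW hAW hc
  obtain ⟨hbW', hb⟩ := mem_and_nextInBlock_mem_of_mem_image hd hW' hBW' hb
  obtain ⟨hdW', hd'⟩ := mem_and_nextInBlock_mem_of_mem_image hd hW' hBW' hd'
  obtain rfl | hWW' := eq_or_ne W W'
  swap
  · exact hβ ⟨W, hW, W', hW', hWW', a, haW, b, hbW', c, hcW, d, hdW', hab, hbc, hcd⟩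
  have hAB : A ≠ B := by rintro rfl; exact hAB rfl
  have hab' := nextInBlock_lt_nextInBlock hbW' hab (ne_fmax_of_lt hcW hbc)
  have hbc' := nextInBlock_lt_nextInBlock hcW hbc (ne_fmax_of_lt hdW' hcd)
  obtain hdmax | hdmax := eq_or_ne d (fmax W)
  · have hda' : nextInBlock W d < nextInBlock W a := by
      rw [hdmax, nextInBlock_fmax]
      exact fmin_lt_nextInBlock haW (ne_fmax_of_lt hbW' hab)
    exact hα ⟨B, hB, A, hA, hAB.symm, _, hd', _, ha, _, hb, _, hc, hda', hab', hbc'⟩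
  · have hcd' := nextInBlock_lt_nextInBlock hdW' hcd hdmax
    exact hα ⟨A, hA, B, hB, hAB, _, ha, _, hb, _, hc, _, hd', hab', hbc', hcd'⟩

/-- Let `β ∈ NC(n)`. Then the map `α ↦ P_β⁻¹ · α` sends the set
`{α ∈ NC(n) : α ≤ β}` into itself. -/
theorem stmt1 (n : ℕ) (β : Finset (Finset ℕ)) (hβ : IsNCPartition n β) :
    Set.MapsTo (fun α => mapPart (permOfInv β) α)
      {α : Finset (Finset ℕ) | IsNCPartition n α ∧ Refines α β}
      {α : Finset (Finset ℕ) | IsNCPartition n α ∧ Refines α β} := by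
  rintro α ⟨⟨hαp, hαnc⟩, hαβ⟩
  obtain ⟨hβp, hβnc⟩ := hβ
  have hd := hβp.2.2.2
  refine ⟨⟨isPartitionOfSet_mapPart hαp (bijOn_permOfInv hβp), ?_⟩, ?_⟩
  · exact not_isCrossing_mapPart_permOfInv hd hβnc hαnc hαβ
  · exact refines_mapPart hαβ fun W hW => mapsTo_permOfInv hd hW
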